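/- Let u and v be positive integers with min(u,v) = 1 and t = max(u,v), and in ℝ set p₊ = √t + √(4+uv), p₋ = −√t + √(4+uv), q₊ = 2 + uv + √(uv(4+uv)) and q₋ = 2 + uv − √(uv(4+uv)). Then for every natural number n, μ(𝒯^{(u,v)}(2n+2)) = √t · ((√t·p₋ + 2)·(q₊)^{n+1} + (√t·p₊ − 2)·(q₋)^{n+1}) / (2^{n+2} · √(4+uv)). -/

import Mathlib

open Matrix Finset

def Lm (u : ℕ) : Matrix (Fin 2) (Fin 2) ℕ := !![1, 0; u, 1]
def Rm (v : ℕ) : Matrix (Fin 2) (Fin 2) ℕ := !![1, v; 0, 1]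

/-- The product of the matrices corresponding to a word: `false ↦ L_u`, `true ↦ R_v`. -/
def wordProd (u v : ℕ) (w : List Bool) : Matrix (Fin 2) (Fin 2) ℕ :=
  (w.map (fun b => if b then Rm v else Lm u)).prod

/-- μ of a matrix: maximum of the four entries. -/
def matMax (M : Matrix (Fin 2) (Fin 2) ℕ) : ℕ :=
  max (max (M 0 0) (M 0 1)) (max (M 1 0) (M 1 1))

/-- μ(𝒯^{(u,v)}(I₂;n)): maximum of μ over all products of exactly n matrices each L_u or R_v. -/
def levelMax (u v n : ℕ) : ℕ :=
  Finset.univ.sup (fun w : Fin n → Bool => matMax (wordProd u v (List.ofFn w)))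

/-
By the symmetry `L_u ↔ R_u` (conjugation by the coordinate swap) we may take `u = t`, `v = 1`.
Split a word of length `2n+2` into `n+1` blocks of two letters. Every column of its product is
dominated, against every functional with nonnegative coefficients, by one of the two columns
`P_n = (L R)ⁿ L² e₀` and `Q_n = (R L)ⁿ⁺¹ e₀`: prepending a block `K` moves both `P_n` and `Q_n`
entrywise below `P_{n+1} = L R P_n` or below `Q_{n+1} = R L Q_n`, because a few linear relations
between `P_n` and `Q_n` persist from one level to the next. Hence the maximal entry is
`B_n = (P_n)₁`, which satisfies `B_{n+2} = (t+2) B_{n+1} - B_n`; the closed form is the Binet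
formula of this recurrence, whose characteristic roots are `q±/2`.
-/

def Dominated {m : Type*} [Fintype m] (c P Q : m → ℕ) : Prop :=
  ∀ x : m → ℕ, x ⬝ᵥ c ≤ max (x ⬝ᵥ P) (x ⬝ᵥ Q)

namespace Dominated

variable {m : Type*} [Fintype m] {c P Q : m → ℕ}

lemma of_le_left (h : c ≤ P) : Dominated c P Q := fun _ =>
  le_max_of_le_left (dotProduct_le_dotProduct_of_nonneg_left h (fun _ => Nat.zero_le _))

lemma of_le_right (h : c ≤ Q) : Dominated c P Q := fun _ =>
  le_max_of_le_right (dotProduct_le_dotProduct_of_nonneg_left h (fun _ => Nat.zero_le _))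

lemma apply_le [DecidableEq m] (h : Dominated c P Q) (i : m) : c i ≤ max (P i) (Q i) := by
  simpa [single_one_dotProduct] using h (Pi.single i 1)

lemma mulVec {K : Matrix m m ℕ} {P' Q' : m → ℕ} (h : Dominated c P Q)
    (hK : (K *ᵥ P ≤ P' ∧ K *ᵥ Q ≤ P') ∨ (K *ᵥ P ≤ Q' ∧ K *ᵥ Q ≤ Q')) :
    Dominated (K *ᵥ c) P' Q' := by
  have hT : ∀ T, K *ᵥ P ≤ T → K *ᵥ Q ≤ T → ∀ x, x ⬝ᵥ (K *ᵥ c) ≤ x ⬝ᵥ T := by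
    intro T hP hQ x
    rw [dotProduct_mulVec]
    refine (h _).trans (max_le ?_ ?_) <;> rw [← dotProduct_mulVec]
    exacts [dotProduct_le_dotProduct_of_nonneg_left hP (fun _ => Nat.zero_le _),
      dotProduct_le_dotProduct_of_nonneg_left hQ (fun _ => Nat.zero_le _)]
  rcases hK with ⟨hP, hQ⟩ | ⟨hP, hQ⟩
  · exact fun x => le_max_of_le_left (hT _ hP hQ x)
  · exact fun x => le_max_of_le_right (hT _ hP hQ x)

end Dominated

structure IsExtremalPair (t : ℕ) (P Q : Fin 2 → ℕ) : Prop where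
  sum_eq : P 0 + P 1 = Q 0 + Q 1
  skew_eq : P 1 + t * Q 1 = t * Q 0 + Q 1
  P0_le_Q1 : P 0 ≤ Q 1
  Q1_le_Q0 : Q 1 ≤ Q 0
  Q0_le_two_mul_Q1 : Q 0 ≤ 2 * Q 1

namespace IsExtremalPair

variable {t : ℕ} {P Q : Fin 2 → ℕ}

lemma le_P1 (h : IsExtremalPair t P Q) : P 0 ≤ P 1 ∧ Q 0 ≤ P 1 ∧ Q 1 ≤ P 1 := by
  obtain ⟨h₁, h₂, h₃, h₄, h₅⟩ := h
  refine ⟨?_, ?_, ?_⟩ <;> nlinarith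

lemma mulVec (ht : 1 ≤ t) (h : IsExtremalPair t P Q) :
    IsExtremalPair t ((Lm t * Rm 1) *ᵥ P) ((Rm 1 * Lm t) *ᵥ Q) := by
  obtain ⟨h₁, h₂, h₃, h₄, h₅⟩ := h
  constructor <;> simp [Lm, Rm, Matrix.mulVec, dotProduct, Fin.sum_univ_two] <;> nlinarith

lemma pair_mulVec_le (ht : 1 ≤ t) (h : IsExtremalPair t P Q) (b c : Bool) :
    let K := (if b then Rm 1 else Lm t) * (if c then Rm 1 else Lm t)
    (K *ᵥ P ≤ (Lm t * Rm 1) *ᵥ P ∧ K *ᵥ Q ≤ (Lm t * Rm 1) *ᵥ P) ∨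
      (K *ᵥ P ≤ (Rm 1 * Lm t) *ᵥ Q ∧ K *ᵥ Q ≤ (Rm 1 * Lm t) *ᵥ Q) := by
  obtain ⟨h₁, h₂, h₃, h₄, h₅⟩ := h
  cases b <;> cases c <;> [left; left; right; right] <;>
    simp only [Pi.le_def, Fin.forall_fin_two] <;>
    simp [Lm, Rm, dotProduct, Fin.sum_univ_two] <;>
    constructorm* _ ∧ _ <;> nlinarith

end IsExtremalPair

-- `colP t n` is column 0 of `(L_t R_1)ⁿ L_t²` and `colQ t n` is column 0 of `(R_1 L_t)ⁿ⁺¹`.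
def colP (t : ℕ) : ℕ → Fin 2 → ℕ
  | 0 => ![1, 2 * t]
  | n + 1 => (Lm t * Rm 1) *ᵥ colP t n

def colQ (t : ℕ) : ℕ → Fin 2 → ℕ
  | 0 => ![t + 1, t]
  | n + 1 => (Rm 1 * Lm t) *ᵥ colQ t n

lemma isExtremalPair_colP_colQ {t : ℕ} (ht : 1 ≤ t) (n : ℕ) :
    IsExtremalPair t (colP t n) (colQ t n) := by
  induction n with
  | zero => constructor <;> simp [colP, colQ] <;> nlinarith
  | succ n ih => exact ih.mulVec ht

lemma wordProd_cons (u v : ℕ) (b : Bool) (w : List Bool) :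
    wordProd u v (b :: w) = (if b then Rm v else Lm u) * wordProd u v w := by
  simp [wordProd]

lemma col_mul_mul {m : Type*} [Fintype m] [DecidableEq m] (A B C : Matrix m m ℕ) (j : m) :
    (A * (B * C)).col j = (A * B) *ᵥ C.col j := by
  rw [← mulVec_single_one, ← mulVec_single_one, mulVec_mulVec, mul_assoc]

lemma dominated_col_wordProd {t : ℕ} (ht : 1 ≤ t) (n : ℕ) (w : List Bool)
    (hw : w.length = 2 * n + 2) (j : Fin 2) :
    Dominated ((wordProd t 1 w).col j) (colP t n) (colQ t n) := by
  induction n generalizing w with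
  | zero =>
    obtain ⟨x, y, rfl⟩ : ∃ x y, w = [x, y] := by
      match w, hw with
      | [x, y], _ => exact ⟨x, y, rfl⟩
    cases x <;> cases y <;> fin_cases j
    all_goals
      first
        | (apply Dominated.of_le_left
           simp [Pi.le_def, Fin.forall_fin_two, wordProd, colP, Lm, Rm] <;> omega)
        | (apply Dominated.of_le_right
           simp [Pi.le_def, Fin.forall_fin_two, wordProd, colQ, Lm, Rm]
           omega)
  | succ n ih =>
    obtain ⟨x, y, w, rfl⟩ : ∃ x y w', w = x :: y :: w' := by
      match w, hw with
      | x :: y :: w', _ => exact ⟨x, y, w', rfl⟩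
    rw [wordProd_cons, wordProd_cons, col_mul_mul]
    exact (ih w (by simp at hw; omega)).mulVec
      ((isExtremalPair_colP_colQ ht n).pair_mulVec_le ht x y)

lemma matMax_le_levelMax (u v : ℕ) (w : List Bool) :
    matMax (wordProd u v w) ≤ levelMax u v w.length := by
  simpa [levelMax] using Finset.le_sup (f := fun g : Fin w.length → Bool =>
    matMax (wordProd u v (List.ofFn g))) (Finset.mem_univ w.get)

lemma levelMax_le_colP {t : ℕ} (ht : 1 ≤ t) (n : ℕ) : levelMax t 1 (2 * n + 2) ≤ colP t n 1 := by
  obtain ⟨hP0, hQ0, hQ1⟩ := (isExtremalPair_colP_colQ ht n).le_P1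
  refine Finset.sup_le fun w _ => ?_
  have hcol : ∀ i, max (colP t n i) (colQ t n i) ≤ colP t n 1 := by
    simp only [Fin.forall_fin_two, max_le_iff]
    exact ⟨⟨hP0, hQ0⟩, le_rfl, hQ1⟩
  have hentry : ∀ i j, wordProd t 1 (List.ofFn w) i j ≤ colP t n 1 := fun i j =>
    ((dominated_col_wordProd ht n (List.ofFn w) List.length_ofFn j).apply_le i).trans (hcol i)
  exact max_le (max_le (hentry 0 0) (hentry 0 1)) (max_le (hentry 1 0) (hentry 1 1))

def peakWord : ℕ → List Bool
  | 0 => [false, false]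
  | n + 1 => false :: true :: peakWord n

lemma length_peakWord (n : ℕ) : (peakWord n).length = 2 * n + 2 := by
  induction n with
  | zero => rfl
  | succ n ih => simp [peakWord, ih]; ring

lemma col_wordProd_peakWord (t n : ℕ) : (wordProd t 1 (peakWord n)).col 0 = colP t n := by
  induction n with
  | zero => ext i; fin_cases i <;> simp [peakWord, wordProd, colP, Lm, Rm]; ring
  | succ n ih => rw [peakWord, wordProd_cons, wordProd_cons, col_mul_mul, ih]; rfl

lemma colP_le_levelMax (t n : ℕ) : colP t n 1 ≤ levelMax t 1 (2 * n + 2) := by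
  rw [← length_peakWord n, ← col_wordProd_peakWord]
  exact (le_max_left _ _).trans ((le_max_right _ _).trans (matMax_le_levelMax t 1 _))

lemma levelMax_eq_colP {t : ℕ} (ht : 1 ≤ t) (n : ℕ) : levelMax t 1 (2 * n + 2) = colP t n 1 :=
  (levelMax_le_colP ht n).antisymm (colP_le_levelMax t n)

lemma wordProd_map_not (u v : ℕ) (w : List Bool) :
    wordProd v u (w.map not) = reindex (Equiv.swap 0 1) (Equiv.swap 0 1) (wordProd u v w) := by
  rw [← coe_reindexAlgEquiv ℕ ℕ, wordProd, wordProd, map_list_prod, List.map_map, List.map_map]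
  congr 1
  refine List.map_congr_left fun b _ => ?_
  ext i j
  cases b <;> fin_cases i <;> fin_cases j <;> simp [Lm, Rm]

lemma matMax_reindex_swap (M : Matrix (Fin 2) (Fin 2) ℕ) :
    matMax (reindex (Equiv.swap 0 1) (Equiv.swap 0 1) M) = matMax M := by
  simp [matMax]
  omega

lemma levelMax_comm (u v n : ℕ) : levelMax u v n = levelMax v u n := by
  suffices h : ∀ u v, levelMax u v n ≤ levelMax v u n from (h u v).antisymm (h v u)
  intro u v
  refine Finset.sup_le fun w _ => ?_
  have h := matMax_le_levelMax v u ((List.ofFn w).map not)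
  rwa [wordProd_map_not, matMax_reindex_swap, List.length_map, List.length_ofFn] at h

lemma colP_add_two_one (t n : ℕ) :
    colP t (n + 2) 1 + colP t n 1 = (t + 2) * colP t (n + 1) 1 := by
  simp [colP, Lm, Rm, mulVec, dotProduct, Fin.sum_univ_two]
  ring

lemma colP_one_eq_closed_form (t n : ℕ) :
    (colP t n 1 : ℝ) =
      √t * ((√t * (-√t + √(4 + t)) + 2) * (2 + t + √(t * (4 + t))) ^ (n + 1) +
        (√t * (√t + √(4 + t)) - 2) * (2 + t - √(t * (4 + t))) ^ (n + 1)) /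
      (2 ^ (n + 2) * √(4 + t)) := by
  have ht : (0 : ℝ) ≤ t := Nat.cast_nonneg t
  rw [Real.sqrt_mul ht]
  set s := √(t : ℝ)
  set r := √(4 + (t : ℝ))
  have hs : s ^ 2 = t := Real.sq_sqrt ht
  have hr : r ^ 2 = 4 + t := Real.sq_sqrt (by positivity)
  have hsr : (s * r) ^ 2 = t * (4 + t) := by linear_combination r ^ 2 * hs + t * hr
  set G : ℕ → ℝ := fun m =>
    (s * (-s + r) + 2) * (2 + t + s * r) ^ m + (s * (s + r) - 2) * (2 + t - s * r) ^ m with hG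
  -- `2 + t ± s r` are the roots of `X² - (2 t + 4) X + 4`
  have hG_rec : ∀ m, G (m + 2) = (2 * t + 4) * G (m + 1) - 4 * G m := fun m => by
    simp only [hG]
    linear_combination ((s * (-s + r) + 2) * (2 + t + s * r) ^ m +
      (s * (s + r) - 2) * (2 + t - s * r) ^ m) * hsr
  have hG0 : s * G 0 = 2 * t * r := by simp only [hG]; linear_combination 2 * r * hs
  have hG1 : s * G 1 = 8 * t * r := by simp only [hG]; linear_combination 2 * r * (4 - s ^ 2) * hs
  suffices h : s * G (n + 1) = 2 ^ (n + 2) * r * colP t n 1 by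
    rw [eq_div_iff (by positivity)]
    linear_combination -h
  induction n using Nat.twoStepInduction with
  | zero => simp [colP]; linear_combination hG1
  | one =>
    simp [colP, Lm, Rm, mulVec, dotProduct, Fin.sum_univ_two]
    linear_combination (2 * t + 4) * hG1 - 4 * hG0 + s * hG_rec 0
  | more n ih₁ ih₂ =>
    have hB : (colP t (n + 2) 1 : ℝ) + colP t n 1 = (t + 2) * colP t (n + 1) 1 := by
      exact_mod_cast colP_add_two_one t n
    linear_combination s * hG_rec (n + 1) + (2 * t + 4) * ih₂ - 4 * ih₁ - 2 ^ (n + 4) * r * hB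

theorem stmt3_general (u v : ℕ) (hmin : min u v = 1) (n : ℕ)
    (t : ℕ) (ht : t = max u v)
    (pp pm qp qm : ℝ)
    (hpp : pp = Real.sqrt t + Real.sqrt (4 + (u : ℝ) * v))
    (hpm : pm = -Real.sqrt t + Real.sqrt (4 + (u : ℝ) * v))
    (hqp : qp = 2 + (u : ℝ) * v + Real.sqrt ((u : ℝ) * v * (4 + (u : ℝ) * v)))
    (hqm : qm = 2 + (u : ℝ) * v - Real.sqrt ((u : ℝ) * v * (4 + (u : ℝ) * v))) :
    (levelMax u v (2 * n + 2) : ℝ) =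
      Real.sqrt t * ((Real.sqrt t * pm + 2) * qp ^ (n + 1) + (Real.sqrt t * pp - 2) * qm ^ (n + 1)) /
        (2 ^ (n + 2) * Real.sqrt (4 + (u : ℝ) * v)) := by
  have ht1 : 1 ≤ t := by omega
  obtain ⟨huv, hlevel⟩ : u * v = t ∧ levelMax u v (2 * n + 2) = levelMax t 1 (2 * n + 2) := by
    rcases (by omega : u = 1 ∨ v = 1) with rfl | rfl
    · exact ⟨by omega, by rw [levelMax_comm, show t = v by omega]⟩
    · exact ⟨by omega, by rw [show t = u by omega]⟩
  have huv' : (u : ℝ) * v = t := by exact_mod_cast huv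
  rw [hpp, hpm, hqp, hqm, huv', hlevel, levelMax_eq_colP ht1, colP_one_eq_closed_form]

theorem stmt3 (u v : ℕ) (hu : 1 ≤ u) (hv : 1 ≤ v) (hmin : min u v = 1) (n : ℕ)
    (t : ℕ) (ht : t = max u v)
    (pp pm qp qm : ℝ)
    (hpp : pp = Real.sqrt t + Real.sqrt (4 + (u : ℝ) * v))
    (hpm : pm = -Real.sqrt t + Real.sqrt (4 + (u : ℝ) * v))
    (hqp : qp = 2 + (u : ℝ) * v + Real.sqrt ((u : ℝ) * v * (4 + (u : ℝ) * v)))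
    (hqm : qm = 2 + (u : ℝ) * v - Real.sqrt ((u : ℝ) * v * (4 + (u : ℝ) * v))) :
    (levelMax u v (2 * n + 2) : ℝ) =
      Real.sqrt t * ((Real.sqrt t * pm + 2) * qp ^ (n + 1) + (Real.sqrt t * pp - 2) * qm ^ (n + 1)) /
        (2 ^ (n + 2) * Real.sqrt (4 + (u : ℝ) * v)) :=
  stmt3_general u v hmin n t ht pp pm qp qm hpp hpm hqp hqm
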